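/- arXiv:2408.12241 — 19 statements merged into one kernel-verified Lean document; each statement's English description precedes it below -/
import Mathlib

section
/- Let K be a commutative ring, S a multiplicative submonoid of K, φ a reduction function and δ an expansion function of ideals of K. If P is a φ-δ-S-primary ideal of K associated to s ∈ S such that rad(φ(P)) ⊆ φ(rad(P)) and rad(δ(P)) ⊆ δ(rad(P)), then rad(P) is a φ-δ-S-primary ideal of K associated to s (i.e., rad(P) is proper, rad(P) ∩ S = ∅, and for all a, b ∈ K, ab ∈ rad(P) \ φ(rad(P)) implies s·a ∈ rad(P) or s·b ∈ δ(rad(P))). -/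
/-- If `P` is a `φ`-`δ`-`S`-primary ideal of `K` associated to `s ∈ S` such that
`rad(φ(P)) ⊆ φ(rad(P))` and `rad(δ(P)) ⊆ δ(rad(P))`, then `rad(P)` is a `φ`-`δ`-`S`-primary
ideal of `K` associated to `s`. -/
theorem radical_phi_delta_S_primary {K : Type*} [CommRing K] (S : Submonoid K)
    (φ δ : Ideal K → Ideal K)
    (hφ1 : ∀ I, φ I ≤ I) (hφ2 : ∀ I J : Ideal K, I ≤ J → φ I ≤ φ J)
    (hδ1 : ∀ I : Ideal K, I ≤ δ I) (hδ2 : ∀ I J : Ideal K, I ≤ J → δ I ≤ δ J)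
    (P : Ideal K) (s : K) (hs : s ∈ S)
    (hproper : P ≠ ⊤) (hdisj : ∀ x ∈ S, x ∉ P)
    (hprimary : ∀ a b : K, a * b ∈ P → a * b ∉ φ P → s * a ∈ P ∨ s * b ∈ δ P)
    (h1 : (φ P).radical ≤ φ P.radical)
    (h2 : (δ P).radical ≤ δ P.radical) :
    P.radical ≠ ⊤ ∧ (∀ x ∈ S, x ∉ P.radical) ∧
      (∀ a b : K, a * b ∈ P.radical → a * b ∉ φ P.radical →
        s * a ∈ P.radical ∨ s * b ∈ δ P.radical) := by
  
  have hone : (1:K) ∉ P := fun h => hproper (Ideal.eq_top_iff_one P |>.mpr h)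
  refine ⟨?_, ?_, ?_⟩
  · intro h
    obtain ⟨n, hn⟩ := (Ideal.eq_top_iff_one _).mp h
    simp only [one_pow] at hn
    exact hone hn
  · intro x hx hxr
    obtain ⟨n, hn⟩ := hxr
    exact hdisj (x^n) (pow_mem hx n) hn
  · intro a b hab habn
    obtain ⟨n, hn⟩ := hab
    have hnpos : n ≠ 0 := by
      rintro rfl; simp only [pow_zero] at hn; exact hone hn
    have habnr : a * b ∉ (φ P).radical := fun h => habn (h1 h)
    have hpow : (a*b)^n ∉ φ P := fun h => habnr ⟨n, h⟩
    rw [mul_pow] at hn hpow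
    rcases hprimary (a^n) (b^n) hn hpow with h | h
    · left
      refine ⟨n, ?_⟩
      rw [mul_pow]
      have : s^n * a^n = s^(n-1) * (s * a^n) := by
        rw [← mul_assoc, ← pow_succ, Nat.sub_add_cancel (Nat.one_le_iff_ne_zero.mpr hnpos)]
      rw [this]
      exact Ideal.mul_mem_left _ _ h
    · right
      refine h2 ⟨n, ?_⟩
      rw [mul_pow]
      have : s^n * b^n = s^(n-1) * (s * b^n) := by
        rw [← mul_assoc, ← pow_succ, Nat.sub_add_cancel (Nat.one_le_iff_ne_zero.mpr hnpos)]
      rw [this]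
      exact Ideal.mul_mem_left _ _ h
end

section
/- Let K be a commutative ring, S a multiplicative submonoid of K, and φ a reduction function of ideals of K. If P is a φ-S-primary ideal of K associated to s ∈ S such that rad(φ(P)) ⊆ φ(rad(P)), then rad(P) is a φ-S-prime ideal of K associated to s, i.e., rad(P) ∩ S = ∅ and for all a, b ∈ K, ab ∈ rad(P) \ φ(rad(P)) implies s·a ∈ rad(P) or s·b ∈ rad(P). -/
/-- If `P` is a `φ`-`S`-primary ideal of `K` associated to `s ∈ S` such that
`rad(φ(P)) ⊆ φ(rad(P))`, then `rad(P)` is a `φ`-`S`-prime ideal of `K` associated to `s`. -/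
theorem radical_phi_S_prime {K : Type*} [CommRing K] (S : Submonoid K)
    (φ : Ideal K → Ideal K)
    (hφ1 : ∀ I, φ I ≤ I) (hφ2 : ∀ I J : Ideal K, I ≤ J → φ I ≤ φ J)
    (P : Ideal K) (s : K) (hs : s ∈ S)
    (hproper : P ≠ ⊤) (hdisj : ∀ x ∈ S, x ∉ P)
    (hprimary : ∀ a b : K, a * b ∈ P → a * b ∉ φ P → s * a ∈ P ∨ s * b ∈ P.radical)
    (h1 : (φ P).radical ≤ φ P.radical) :
    (∀ x ∈ S, x ∉ P.radical) ∧
      (∀ a b : K, a * b ∈ P.radical → a * b ∉ φ P.radical →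
        s * a ∈ P.radical ∨ s * b ∈ P.radical) := by
  constructor
  · intro x hx hxr
    obtain ⟨n, hn⟩ := hxr
    exact hdisj _ (pow_mem hx n) hn
  · intro a b hab hnab
    obtain ⟨n, hn⟩ := hab
    have hnpos : n ≠ 0 := by
      rintro rfl
      exact hproper ((Ideal.eq_top_iff_one P).2 (by simpa using hn))
    have hnphi : (a * b) ^ n ∉ φ P := fun h => hnab (h1 ⟨n, by
      simpa using h⟩)
    have hn' : a ^ n * b ^ n ∈ P := by rwa [mul_pow] at hn
    have hnphi' : a ^ n * b ^ n ∉ φ P := by rwa [mul_pow] at hnphi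
    rcases hprimary (a ^ n) (b ^ n) hn' hnphi' with h | h
    · left
      refine ⟨n, ?_⟩
      have : (s * a) ^ n = s ^ (n - 1) * (s * a ^ n) := by
        rw [mul_pow]
        ring_nf
        rw [← pow_succ' s (n-1), Nat.sub_add_cancel (Nat.one_le_iff_ne_zero.2 hnpos)]
      rw [this]
      exact Ideal.mul_mem_left _ _ h
    · right
      obtain ⟨m, hm⟩ := h
      refine ⟨n * m, ?_⟩
      have : (s * b) ^ (n * m) = s ^ (n * m - m) * (s * b ^ n) ^ m := by
        rw [mul_pow, mul_pow, ← pow_mul, ← mul_assoc, ← pow_add,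
          Nat.sub_add_cancel (Nat.le_mul_of_pos_left m (Nat.pos_of_ne_zero hnpos))]
      rw [this]
      exact Ideal.mul_mem_left _ _ hm
end

section
/- Let K be a commutative ring, S a multiplicative submonoid of K, and φ a reduction function of ideals of K. Let P be a φ-S-primary ideal of K associated to s ∈ S such that rad(φ(P)) ⊆ φ(rad(P)) and (φ(rad(P)) : t) ⊆ (φ(rad(P)) : s) for all t ∈ S. If u ∈ K \ (rad(P) : s), then (rad(P) : u) ∩ S = ∅. -/
/-- Let `P` be a `φ`-`S`-primary ideal of `K` associated to `s ∈ S` such that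
`rad(φ(P)) ⊆ φ(rad(P))` and `(φ(rad(P)) : t) ⊆ (φ(rad(P)) : s)` for all `t ∈ S`.
If `u ∈ K \ (rad(P) : s)`, then `(rad(P) : u) ∩ S = ∅`. -/
theorem colon_radical_disjoint {K : Type*} [CommRing K] (S : Submonoid K)
    (φ : Ideal K → Ideal K)
    (hφ1 : ∀ I, φ I ≤ I) (hφ2 : ∀ I J : Ideal K, I ≤ J → φ I ≤ φ J)
    (P : Ideal K) (s : K) (hs : s ∈ S)
    (hproper : P ≠ ⊤) (hdisj : ∀ x ∈ S, x ∉ P)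
    (hprimary : ∀ a b : K, a * b ∈ P → a * b ∉ φ P → s * a ∈ P ∨ s * b ∈ P.radical)
    (h1 : (φ P).radical ≤ φ P.radical)
    (h2 : ∀ t ∈ S, (φ P.radical).colon (Ideal.span {t}) ≤ (φ P.radical).colon (Ideal.span {s}))
    (u : K) (hu : u ∉ P.radical.colon (Ideal.span {s})) :
    ∀ t ∈ S, t ∉ P.radical.colon (Ideal.span {u}) := by
  intro t ht htu
  rw [Ideal.mem_colon_span_singleton] at htu
  apply hu
  rw [Ideal.mem_colon_span_singleton]
  -- htu : t * u ∈ P.radical; goal : u * s ∈ P.radical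
  obtain ⟨n, hn⟩ := htu
  rcases Nat.eq_zero_or_pos n with rfl | hnpos
  · exact absurd ((Ideal.eq_top_iff_one P).mpr (by simpa using hn)) hproper
  by_cases hφ : (t * u) ^ n ∈ φ P
  · -- t * u ∈ rad (φ P) ≤ φ (rad P), use h2
    have htu' : t * u ∈ φ P.radical := h1 ⟨n, hφ⟩
    have : u ∈ (φ P.radical).colon (Ideal.span {t}) := by
      rw [Ideal.mem_colon_span_singleton, mul_comm]; exact htu'
    have := h2 t ht this
    rw [Ideal.mem_colon_span_singleton] at this
    exact hφ1 _ this
  · have hab : t ^ n * u ^ n ∈ P := by rw [← mul_pow]; exact hn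
    have hab' : t ^ n * u ^ n ∉ φ P := by rw [← mul_pow]; exact hφ
    rcases hprimary (t ^ n) (u ^ n) hab hab' with h | h
    · exact absurd h (hdisj _ (S.mul_mem hs (S.pow_mem ht n)))
    · -- s * u ^ n ∈ rad P ⇒ (u*s)^n ∈ rad P
      obtain ⟨m, rfl⟩ : ∃ m, n = m + 1 := ⟨n - 1, (Nat.succ_pred_eq_of_pos hnpos).symm⟩
      have heq : (u * s) ^ (m + 1) = s ^ m * (s * u ^ (m + 1)) := by ring
      have hmem : (u * s) ^ (m + 1) ∈ P.radical := by
        rw [heq]; exact Ideal.mul_mem_left _ _ h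
      rw [← Ideal.radical_idem P]
      exact ⟨m + 1, hmem⟩
end

section
/- Let K be a commutative ring, S a multiplicative submonoid of K, φ a reduction function and δ an expansion function of ideals of K. Let P be a φ-δ-S-primary ideal of K associated to s ∈ S such that (δ(P) : s) = (rad(P) : s), (φ(rad(P)) : t) ⊆ (φ(rad(P)) : s) for all t ∈ S, and δ(P) ⊆ rad(P). Then (δ(P) : s) = (δ(P) : s²). Moreover, if u ∈ K \ (δ(P) : s), then (δ(P) : u) ∩ S = ∅. -/
/-- Let `P` be a `φ`-`δ`-`S`-primary ideal of `K` associated to `s ∈ S` such that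
`(δ(P) : s) = (rad(P) : s)`, `(φ(rad(P)) : t) ⊆ (φ(rad(P)) : s)` for all `t ∈ S`, and
`δ(P) ⊆ rad(P)`. Then `(δ(P) : s) = (δ(P) : s²)`. Moreover, if `u ∈ K \ (δ(P) : s)`, then
`(δ(P) : u) ∩ S = ∅`. -/
theorem colon_delta_eq_sq {K : Type*} [CommRing K] (S : Submonoid K)
    (φ δ : Ideal K → Ideal K)
    (hφ1 : ∀ I, φ I ≤ I) (hφ2 : ∀ I J : Ideal K, I ≤ J → φ I ≤ φ J)
    (hδ1 : ∀ I : Ideal K, I ≤ δ I) (hδ2 : ∀ I J : Ideal K, I ≤ J → δ I ≤ δ J)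
    (P : Ideal K) (s : K) (hs : s ∈ S)
    (hproper : P ≠ ⊤) (hdisj : ∀ x ∈ S, x ∉ P)
    (hprimary : ∀ a b : K, a * b ∈ P → a * b ∉ φ P → s * a ∈ P ∨ s * b ∈ δ P)
    (h1 : (δ P).colon (Ideal.span {s}) = P.radical.colon (Ideal.span {s}))
    (h2 : ∀ t ∈ S, (φ P.radical).colon (Ideal.span {t}) ≤ (φ P.radical).colon (Ideal.span {s}))
    (h3 : δ P ≤ P.radical) :
    (δ P).colon (Ideal.span {s}) = (δ P).colon (Ideal.span {s ^ 2}) ∧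
      (∀ u : K, u ∉ (δ P).colon (Ideal.span {s}) →
        ∀ t ∈ S, t ∉ (δ P).colon (Ideal.span {u})) := by
  -- no element of S is in rad P
  have hSrad : ∀ x ∈ S, x ∉ P.radical := by
    intro x hx hxr
    obtain ⟨k, hk⟩ := hxr
    exact hdisj (x ^ k) (pow_mem hx k) hk
  -- key lemma: if a * t ∈ rad P with t ∈ S, then a * s ∈ rad P
  have hC : ∀ a t : K, t ∈ S → a * t ∈ P.radical → a * s ∈ P.radical := by
    intro a t ht hat
    obtain ⟨n, hn⟩ := hat
    cases n with
    | zero =>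
      exact absurd hn (by simpa using hdisj 1 S.one_mem)
    | succ m =>
      rw [mul_pow] at hn
      by_cases hφ : a ^ (m + 1) * t ^ (m + 1) ∈ φ P
      · -- use h2
        have h4 : a ^ (m + 1) * t ^ (m + 1) ∈ φ P.radical :=
          hφ2 P P.radical Ideal.le_radical hφ
        have h5 : a ^ (m + 1) ∈ (φ P.radical).colon (Ideal.span {t ^ (m + 1)}) :=
          Ideal.mem_colon_span_singleton.mpr h4
        have h6 : a ^ (m + 1) * s ∈ φ P.radical :=
          Ideal.mem_colon_span_singleton.mp (h2 (t ^ (m + 1)) (pow_mem ht (m + 1)) h5)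
        have h7 : (a * s) ^ (m + 1) ∈ P.radical := by
          have : (a * s) ^ (m + 1) = (a ^ (m + 1) * s) * s ^ m := by ring
          rw [this]
          exact Ideal.mul_mem_right _ _ (hφ1 _ h6)
        exact Ideal.mem_radical_of_pow_mem (Ideal.radical_idem P ▸ Ideal.le_radical h7)
      · rcases hprimary (a ^ (m + 1)) (t ^ (m + 1)) hn hφ with h4 | h4
        · have h7 : (a * s) ^ (m + 1) ∈ P := by
            have : (a * s) ^ (m + 1) = (s * a ^ (m + 1)) * s ^ m := by ring
            rw [this]
            exact Ideal.mul_mem_right _ _ h4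
          exact Ideal.mem_radical_of_pow_mem (Ideal.le_radical h7)
        · exact absurd (h3 h4) (hSrad _ (mul_mem hs (pow_mem ht (m + 1))))
  -- from a * s ∈ rad P deduce a ∈ (δ P : s)
  have hD : ∀ a : K, a * s ∈ P.radical → a ∈ (δ P).colon (Ideal.span {s}) := by
    intro a ha
    rw [h1]
    exact Ideal.mem_colon_span_singleton.mpr ha
  constructor
  · apply le_antisymm
    · intro x hx
      have hxs : x * s ∈ δ P := Ideal.mem_colon_span_singleton.mp hx
      exact Ideal.mem_colon_span_singleton.mpr (by
        have : x * s ^ 2 = (x * s) * s := by ring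
        rw [this]
        exact Ideal.mul_mem_right _ _ hxs)
    · intro x hx
      have hxs : x * s ^ 2 ∈ δ P := Ideal.mem_colon_span_singleton.mp hx
      exact hD x (hC x (s ^ 2) (pow_mem hs 2) (h3 hxs))
  · intro u hu t ht htu
    have h4 : t * u ∈ δ P := Ideal.mem_colon_span_singleton.mp htu
    have h5 : u * t ∈ P.radical := by rw [mul_comm]; exact h3 h4
    exact hu (hD u (hC u t ht h5))
end

section
/- Let K be a commutative ring, S a multiplicative submonoid of K, φ a reduction function and δ an expansion function of ideals of K. Let P be a φ-δ-S-primary ideal of K associated to s ∈ S. If u ∈ K \ (δ(P) : s²), then (P : s·u) = (φ(P) : s·u) or (P : s·u) = (P : s). -/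
/-- Let `P` be a `φ`-`δ`-`S`-primary ideal of `K` associated to `s ∈ S`.
If `u ∈ K \ (δ(P) : s²)`, then `(P : s·u) = (φ(P) : s·u)` or `(P : s·u) = (P : s)`. -/
theorem colon_su_eq {K : Type*} [CommRing K] (S : Submonoid K)
    (φ δ : Ideal K → Ideal K)
    (hφ1 : ∀ I, φ I ≤ I) (hφ2 : ∀ I J : Ideal K, I ≤ J → φ I ≤ φ J)
    (hδ1 : ∀ I : Ideal K, I ≤ δ I) (hδ2 : ∀ I J : Ideal K, I ≤ J → δ I ≤ δ J)
    (P : Ideal K) (s : K) (hs : s ∈ S)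
    (hproper : P ≠ ⊤) (hdisj : ∀ x ∈ S, x ∉ P)
    (hprimary : ∀ a b : K, a * b ∈ P → a * b ∉ φ P → s * a ∈ P ∨ s * b ∈ δ P)
    (u : K) (hu : u ∉ (δ P).colon (Ideal.span {s ^ 2})) :
    P.colon (Ideal.span {s * u}) = (φ P).colon (Ideal.span {s * u}) ∨
      P.colon (Ideal.span {s * u}) = P.colon (Ideal.span {s}) := by
  rw [Ideal.mem_colon_span_singleton] at hu
  -- key: if a*(s*u) ∈ P \ φ P then s*a ∈ P
  have key : ∀ a : K, a * (s * u) ∈ P → a * (s * u) ∉ φ P → s * a ∈ P := by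
    intro a h1 h2
    rcases hprimary a (s * u) h1 h2 with h | h
    · exact h
    · exact absurd (by rwa [show u * s ^ 2 = s * (s * u) by ring]) hu
  by_cases hall : ∀ x ∈ P.colon (Ideal.span {s * u}), x * (s * u) ∈ φ P
  · left
    apply le_antisymm
    · intro x hx
      rw [Ideal.mem_colon_span_singleton]
      exact hall x hx
    · intro x hx
      rw [Ideal.mem_colon_span_singleton] at hx ⊢
      exact hφ1 P hx
  · right
    push_neg at hall
    obtain ⟨a₀, ha₀, ha₀'⟩ := hall
    rw [Ideal.mem_colon_span_singleton] at ha₀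
    have hsa₀ : s * a₀ ∈ P := key a₀ ha₀ ha₀'
    apply le_antisymm
    · intro x hx
      rw [Ideal.mem_colon_span_singleton] at hx ⊢
      rw [mul_comm]
      by_cases hxφ : x * (s * u) ∈ φ P
      · -- use x + a₀
        have h1 : (x + a₀) * (s * u) ∈ P := by
          rw [add_mul]; exact P.add_mem hx ha₀
        have h2 : (x + a₀) * (s * u) ∉ φ P := by
          rw [add_mul]
          intro hmem
          exact ha₀' (by simpa using (φ P).sub_mem hmem hxφ)
        have := key (x + a₀) h1 h2
        rw [mul_add] at this
        have := P.sub_mem this hsa₀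
        simpa using this
      · exact key x hx hxφ
    · intro x hx
      rw [Ideal.mem_colon_span_singleton] at hx ⊢
      rw [show x * (s * u) = (x * s) * u by ring]
      exact P.mul_mem_right u hx
end

section
/- Let K be a commutative ring, S a multiplicative submonoid of K, φ a reduction function and δ an expansion function of ideals of K. Let P be a φ-δ-S-primary ideal of K associated to s ∈ S such that (φ(P) : u) ⊆ φ((P : u)) for every u ∈ K \ P. Then for every u ∈ K \ P, the ideal (P : u) satisfies the φ-δ-S-primary condition associated to s: for all a, b ∈ K, ab ∈ (P : u) \ φ((P : u)) implies s·a ∈ (P : u) or s·b ∈ δ((P : u)). -/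
/-- Let `P` be a `φ`-`δ`-`S`-primary ideal of `K` associated to `s ∈ S` such that
`(φ(P) : u) ⊆ φ((P : u))` for every `u ∈ K \ P`. Then for every `u ∈ K \ P`, the ideal
`(P : u)` satisfies the `φ`-`δ`-`S`-primary condition associated to `s`. -/
theorem colon_phi_delta_S_primary {K : Type*} [CommRing K] (S : Submonoid K)
    (φ δ : Ideal K → Ideal K)
    (hφ1 : ∀ I, φ I ≤ I) (hφ2 : ∀ I J : Ideal K, I ≤ J → φ I ≤ φ J)
    (hδ1 : ∀ I : Ideal K, I ≤ δ I) (hδ2 : ∀ I J : Ideal K, I ≤ J → δ I ≤ δ J)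
    (P : Ideal K) (s : K) (hs : s ∈ S)
    (hproper : P ≠ ⊤) (hdisj : ∀ x ∈ S, x ∉ P)
    (hprimary : ∀ a b : K, a * b ∈ P → a * b ∉ φ P → s * a ∈ P ∨ s * b ∈ δ P)
    (hcolon : ∀ u : K, u ∉ P →
      (φ P).colon (Ideal.span {u}) ≤ φ (P.colon (Ideal.span {u}))) :
    ∀ u : K, u ∉ P → ∀ a b : K,
      a * b ∈ P.colon (Ideal.span {u}) → a * b ∉ φ (P.colon (Ideal.span {u})) →
      s * a ∈ P.colon (Ideal.span {u}) ∨ s * b ∈ δ (P.colon (Ideal.span {u})) := by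
  intro u hu a b hab hnab
  have habu : (a * u) * b ∈ P := by
    rw [Ideal.mem_colon_span_singleton] at hab
    rw [mul_right_comm]; exact hab
  have hnabu : (a * u) * b ∉ φ P := by
    intro h
    apply hnab
    apply hcolon u hu
    rw [Ideal.mem_colon_span_singleton]
    rwa [mul_right_comm] at h
  rcases hprimary (a * u) b habu hnabu with h | h
  · left
    rw [Ideal.mem_colon_span_singleton, mul_assoc] at *
    exact h
  · right
    exact hδ2 P _ (fun x hx => Ideal.mem_colon_span_singleton.mpr (Ideal.mul_mem_right u P hx)) h
end

section
/- Let K be a commutative ring, S a multiplicative submonoid of K, φ a reduction function and δ an expansion function of ideals of K. Let Q be an ideal of K with Q ∩ S ≠ ∅, and let P be a φ-δ-S-primary ideal of K associated to s ∈ S. Assume φ is constant on ideals (φ(I) = φ(P) for every ideal I of K) and δ(P ∩ Q) = δ(P) ∩ δ(Q). Then P ∩ Q is a φ-δ-S-primary ideal of K: (P ∩ Q) ∩ S = ∅, and for every t ∈ Q ∩ S, P ∩ Q is φ-δ-S-primary associated to t·s ∈ S, i.e., for all a, b ∈ K, ab ∈ (P ∩ Q) \ φ(P ∩ Q) implies (t·s)·a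 ∈ P ∩ Q or (t·s)·b ∈ δ(P ∩ Q). -/
/-- Let `Q` be an ideal with `Q ∩ S ≠ ∅` and `P` a `φ`-`δ`-`S`-primary ideal
associated to `s ∈ S`. If `φ` is constant on ideals and `δ(P ⊓ Q) = δ(P) ⊓ δ(Q)`, then
`P ⊓ Q` is a `φ`-`δ`-`S`-primary ideal of `K` associated to `t·s` for each `t ∈ Q ∩ S`. -/
theorem inf_phi_delta_S_primary {K : Type*} [CommRing K] (S : Submonoid K)
    (φ δ : Ideal K → Ideal K)
    (hφ1 : ∀ I, φ I ≤ I) (hφ2 : ∀ I J : Ideal K, I ≤ J → φ I ≤ φ J)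
    (hδ1 : ∀ I : Ideal K, I ≤ δ I) (hδ2 : ∀ I J : Ideal K, I ≤ J → δ I ≤ δ J)
    (P Q : Ideal K) (s : K) (hs : s ∈ S)
    (hproper : P ≠ ⊤) (hdisj : ∀ x ∈ S, x ∉ P)
    (hprimary : ∀ a b : K, a * b ∈ P → a * b ∉ φ P → s * a ∈ P ∨ s * b ∈ δ P)
    (hconst : ∀ I : Ideal K, φ I = φ P)
    (hQS : ∃ t, t ∈ Q ∧ t ∈ S)
    (hdelta : δ (P ⊓ Q) = δ P ⊓ δ Q) :
    (∀ x ∈ S, x ∉ P ⊓ Q) ∧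
      ∀ t : K, t ∈ Q → t ∈ S → ∀ a b : K,
        a * b ∈ P ⊓ Q → a * b ∉ φ (P ⊓ Q) →
        (t * s) * a ∈ P ⊓ Q ∨ (t * s) * b ∈ δ (P ⊓ Q) := by
  refine ⟨fun x hxS hx => hdisj x hxS hx.1, ?_⟩
  intro t htQ htS a b hab hnφ
  rw [hconst (P ⊓ Q)] at hnφ
  rcases hprimary a b hab.1 hnφ with h | h
  · left
    constructor
    · have : t * (s * a) ∈ P := Ideal.mul_mem_left P t h
      simpa [mul_assoc] using this
    · have : t * (s * a) ∈ Q := Ideal.mul_mem_right _ Q htQ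
      simpa [mul_assoc] using this
  · right
    rw [hdelta]
    constructor
    · have : t * (s * b) ∈ δ P := Ideal.mul_mem_left _ t h
      simpa [mul_assoc] using this
    · have : t * (s * b) ∈ δ Q := Ideal.mul_mem_right _ _ (hδ1 Q htQ)
      simpa [mul_assoc] using this
end

section
/- Let K be a commutative ring, S a multiplicative submonoid of K, φ a reduction function and δ an expansion function of ideals of K. Let Q be an ideal of K with Q ∩ S ≠ ∅, and let P be a φ-δ-S-primary ideal of K associated to s ∈ S. Assume φ is constant on ideals (φ(I) = φ(P) for every ideal I of K) and δ(Q·P) = δ(Q) ∩ δ(P). Then the product ideal Q·P is a φ-δ-S-primary ideal of K: (Q·P) ∩ S = ∅, and for every t ∈ Q ∩ S, Q·P is φ-δ-S-primary associated to t·s ∈ S, i.e., for all a, b ∈ K, ab ∈ (Q·P) \ φ(Q·P) implies (t·s)·a ∈ Q·P or (t·s)·b ∈ δ(Q·P). -/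
theorem mul_phi_delta_S_primary_general {K : Type*} [CommRing K] (S : Submonoid K)
    (φ δ : Ideal K → Ideal K)
    (hδ1 : ∀ I : Ideal K, I ≤ δ I)
    (P Q : Ideal K) (s : K)
    (hdisj : ∀ x ∈ S, x ∉ P)
    (hprimary : ∀ a b : K, a * b ∈ P → a * b ∉ φ P → s * a ∈ P ∨ s * b ∈ δ P)
    (hconst : ∀ I : Ideal K, φ I = φ P)
    (hdelta : δ (Q * P) = δ Q ⊓ δ P) :
    (∀ x ∈ S, x ∉ Q * P) ∧
      ∀ t : K, t ∈ Q → t ∈ S → ∀ a b : K,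
        a * b ∈ Q * P → a * b ∉ φ (Q * P) →
        (t * s) * a ∈ Q * P ∨ (t * s) * b ∈ δ (Q * P) := by
  have hQP_le : Q * P ≤ P := Ideal.mul_le_right
  refine ⟨fun x hx hxQP => hdisj x hx (hQP_le hxQP), ?_⟩
  intro t htQ _ a b hab hnab
  rw [hconst] at hnab
  rcases hprimary a b (hQP_le hab) hnab with hsa | hsb
  · left
    rw [mul_assoc]
    exact Ideal.mul_mem_mul htQ hsa
  · right
    rw [hdelta, mul_assoc]
    exact ⟨Ideal.mul_mem_right _ _ (hδ1 Q htQ), Ideal.mul_mem_left _ _ hsb⟩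

/-- Let `Q` be an ideal with `Q ∩ S ≠ ∅` and `P` a `φ`-`δ`-`S`-primary ideal
associated to `s ∈ S`. If `φ` is constant on ideals and `δ(Q·P) = δ(Q) ⊓ δ(P)`, then
`Q·P` is a `φ`-`δ`-`S`-primary ideal of `K` associated to `t·s` for each `t ∈ Q ∩ S`. -/
theorem mul_phi_delta_S_primary {K : Type*} [CommRing K] (S : Submonoid K)
    (φ δ : Ideal K → Ideal K)
    (hφ1 : ∀ I, φ I ≤ I) (hφ2 : ∀ I J : Ideal K, I ≤ J → φ I ≤ φ J)
    (hδ1 : ∀ I : Ideal K, I ≤ δ I) (hδ2 : ∀ I J : Ideal K, I ≤ J → δ I ≤ δ J)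
    (P Q : Ideal K) (s : K) (hs : s ∈ S)
    (hproper : P ≠ ⊤) (hdisj : ∀ x ∈ S, x ∉ P)
    (hprimary : ∀ a b : K, a * b ∈ P → a * b ∉ φ P → s * a ∈ P ∨ s * b ∈ δ P)
    (hconst : ∀ I : Ideal K, φ I = φ P)
    (hQS : ∃ t, t ∈ Q ∧ t ∈ S)
    (hdelta : δ (Q * P) = δ Q ⊓ δ P) :
    (∀ x ∈ S, x ∉ Q * P) ∧
      ∀ t : K, t ∈ Q → t ∈ S → ∀ a b : K,
        a * b ∈ Q * P → a * b ∉ φ (Q * P) →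
        (t * s) * a ∈ Q * P ∨ (t * s) * b ∈ δ (Q * P) :=
  mul_phi_delta_S_primary_general S φ δ hδ1 P Q s hdisj hprimary hconst hdelta
end

section
/- Let K be a commutative ring and let S ⊆ T be multiplicative submonoids of K such that for each s ∈ T there exists s′ ∈ T with s·s′ ∈ S. Let φ be a reduction function and δ an expansion function of ideals of K. If P is a φ-δ-T-primary ideal of K associated to some s ∈ T, then P is a φ-δ-S-primary ideal of K, i.e., P ∩ S = ∅ and there exists t ∈ S such that for all a, b ∈ K, ab ∈ P \ φ(P) implies t·a ∈ P or t·b ∈ δ(P). -/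
/-- Let `S ⊆ T` be multiplicative submonoids of `K` such that for each `s ∈ T`
there exists `s′ ∈ T` with `s·s′ ∈ S`. If `P` is a `φ`-`δ`-`T`-primary ideal of `K` associated
to some `s ∈ T`, then `P` is a `φ`-`δ`-`S`-primary ideal of `K`. -/
theorem phi_delta_T_primary_to_S {K : Type*} [CommRing K] (S T : Submonoid K)
    (hST : S ≤ T)
    (hcomp : ∀ s ∈ T, ∃ s' ∈ T, s * s' ∈ S)
    (φ δ : Ideal K → Ideal K)
    (hφ1 : ∀ I, φ I ≤ I) (hφ2 : ∀ I J : Ideal K, I ≤ J → φ I ≤ φ J)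
    (hδ1 : ∀ I : Ideal K, I ≤ δ I) (hδ2 : ∀ I J : Ideal K, I ≤ J → δ I ≤ δ J)
    (P : Ideal K) (s : K) (hs : s ∈ T)
    (hproper : P ≠ ⊤) (hdisj : ∀ x ∈ T, x ∉ P)
    (hprimary : ∀ a b : K, a * b ∈ P → a * b ∉ φ P → s * a ∈ P ∨ s * b ∈ δ P) :
    (∀ x ∈ S, x ∉ P) ∧
      ∃ t ∈ S, ∀ a b : K, a * b ∈ P → a * b ∉ φ P → t * a ∈ P ∨ t * b ∈ δ P := by
  refine ⟨fun x hx => hdisj x (hST hx), ?_⟩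
  obtain ⟨s', hs'T, hss'⟩ := hcomp s hs
  refine ⟨s * s', hss', fun a b hab hnab => ?_⟩
  rcases hprimary a b hab hnab with h | h
  · left
    have : s' * (s * a) ∈ P := P.mul_mem_left s' h
    rwa [show s' * (s * a) = s * s' * a by ring] at this
  · right
    have : s' * (s * b) ∈ δ P := (δ P).mul_mem_left s' h
    rwa [show s' * (s * b) = s * s' * b by ring] at this
end

section
/- Let K be a commutative ring, S a multiplicative submonoid of K, φ a reduction function and δ an expansion function of ideals of K, and let P be a proper ideal of K. Let S′ = {a ∈ K : the image of a in the localization S⁻¹K is a unit}. Then P is a φ-δ-S-primary ideal of K (i.e., P ∩ S = ∅ and there exists s ∈ S such that for all a, b ∈ K, ab ∈ P \ φ(P) implies s·a ∈ P or s·b ∈ δ(P)) if and only if P is a φ-δ-S′-primary ideal of K (i.e., P ∩ S′ = ∅ and there exists s′ ∈ S′ such that for all a, b ∈ K, ab ∈ P \ φ(P) implies s′·a ∈ P or s′·b ∈ δ(P)). -/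
lemma exists_mul_mem_of_isUnit_map {K : Type*} [CommRing K] (S : Submonoid K) (x : K)
    (h : IsUnit (algebraMap K (Localization S) x)) : ∃ c : K, x * c ∈ S := by
  obtain ⟨u, hu⟩ := h
  obtain ⟨⟨b, t⟩, hbt⟩ := IsLocalization.surj S (↑u⁻¹ : Localization S)
  have h1 : algebraMap K (Localization S) (x * b) = algebraMap K (Localization S) t := by
    rw [map_mul, ← hbt, ← mul_assoc, ← hu, u.mul_inv, one_mul]
  obtain ⟨c, hc⟩ := (IsLocalization.eq_iff_exists S (Localization S)).mp h1
  exact ⟨b * c, by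
    have : x * (b * c) = (c : K) * t := by ring_nf; ring_nf at hc; linear_combination hc
    rw [this]; exact S.mul_mem c.2 t.2⟩

/-- `P` is a `φ`-`δ`-`S`-primary ideal of `K` iff `P` is a `φ`-`δ`-`S′`-primary
ideal of `K`, where `S′ = {a ∈ K : a/1 is invertible in S⁻¹K}`. -/
theorem phi_delta_S_primary_iff_saturation {K : Type*} [CommRing K] (S : Submonoid K)
    (φ δ : Ideal K → Ideal K)
    (hφ1 : ∀ I, φ I ≤ I) (hφ2 : ∀ I J : Ideal K, I ≤ J → φ I ≤ φ J)
    (hδ1 : ∀ I : Ideal K, I ≤ δ I) (hδ2 : ∀ I J : Ideal K, I ≤ J → δ I ≤ δ J)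
    (P : Ideal K) (hproper : P ≠ ⊤) :
    ((∀ x ∈ S, x ∉ P) ∧
      ∃ s ∈ S, ∀ a b : K, a * b ∈ P → a * b ∉ φ P → s * a ∈ P ∨ s * b ∈ δ P) ↔
    ((∀ x : K, IsUnit (algebraMap K (Localization S) x) → x ∉ P) ∧
      ∃ s' : K, IsUnit (algebraMap K (Localization S) s') ∧
        ∀ a b : K, a * b ∈ P → a * b ∉ φ P → s' * a ∈ P ∨ s' * b ∈ δ P) := by
  constructor
  · rintro ⟨hdisj, s, hs, hprim⟩
    refine ⟨fun x hx hxP => ?_, s, IsLocalization.map_units (Localization S) ⟨s, hs⟩, hprim⟩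
    obtain ⟨c, hc⟩ := exists_mul_mem_of_isUnit_map S x hx
    exact hdisj _ hc (P.mul_mem_right c hxP)
  · rintro ⟨hdisj, s', hs', hprim⟩
    obtain ⟨c, hc⟩ := exists_mul_mem_of_isUnit_map S s' hs'
    refine ⟨fun x hx => hdisj x (IsLocalization.map_units (Localization S) ⟨x, hx⟩),
      s' * c, hc, fun a b hab hab' => ?_⟩
    rcases hprim a b hab hab' with h | h
    · exact Or.inl (by have := P.mul_mem_left c h; convert this using 1; ring)
    · exact Or.inr (by have := (δ P).mul_mem_left c h; convert this using 1; ring)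
end

section
/- Let K be a commutative ring, S a multiplicative submonoid of K, φ a reduction function and δ an expansion function of ideals of K. Let P be a strongly φ-δ-S-primary ideal of K associated to s ∈ S. If a, b ∈ K satisfy ab ∈ φ(P), s·a ∉ P, s·b ∉ P, s·a ∉ δ(P), and s·b ∉ δ(P), then a·P ⊆ φ(P) and b·P ⊆ φ(P) (i.e., a·p ∈ φ(P) and b·p ∈ φ(P) for every p ∈ P). -/
lemma aux_strong_step {K : Type*} [CommRing K]
    (φ δ : Ideal K → Ideal K) (P : Ideal K) (s : K)
    (hstrong : ∀ A B : Ideal K, A * B ≤ P → ¬ (A * B ≤ φ P) →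
      (∀ x ∈ A, s * x ∈ P) ∨ (∀ x ∈ B, s * x ∈ δ P))
    (a b : K) (hab : a * b ∈ φ P)
    (hsa : s * a ∉ P) (hsb' : s * b ∉ δ P) (hφP : φ P ≤ P)
    (p : K) (hp : p ∈ P) : a * p ∈ φ P := by
  by_contra h
  have hAB : Ideal.span {a} * Ideal.span ({b, p} : Set K) ≤ P := by
    refine Ideal.mul_le.2 fun r hr z hz => ?_
    obtain ⟨c, rfl⟩ := Ideal.mem_span_singleton'.1 hr
    obtain ⟨m, n, rfl⟩ := Ideal.mem_span_pair.1 hz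
    have : c * a * (m * b + n * p) = (c * m) * (a * b) + (c * n * a) * p := by ring
    rw [this]
    exact P.add_mem (P.mul_mem_left _ (hφP hab)) (P.mul_mem_left _ hp)
  have hnot : ¬ (Ideal.span {a} * Ideal.span ({b, p} : Set K) ≤ φ P) := by
    intro hle
    exact h (hle (Ideal.mul_mem_mul (Ideal.mem_span_singleton_self a)
      (Ideal.subset_span (by simp))))
  rcases hstrong _ _ hAB hnot with h1 | h2
  · exact hsa (h1 a (Ideal.mem_span_singleton_self a))
  · exact hsb' (h2 b (Ideal.subset_span (by simp)))

/-- Let `P` be a strongly `φ`-`δ`-`S`-primary ideal of `K` associated to `s ∈ S`.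
If `a, b ∈ K` satisfy `ab ∈ φ(P)`, `s·a ∉ P`, `s·b ∉ P`, `s·a ∉ δ(P)`, and `s·b ∉ δ(P)`, then
`a·P ⊆ φ(P)` and `b·P ⊆ φ(P)`. -/
theorem strongly_mul_mem_phi {K : Type*} [CommRing K] (S : Submonoid K)
    (φ δ : Ideal K → Ideal K)
    (hφ1 : ∀ I, φ I ≤ I) (hφ2 : ∀ I J : Ideal K, I ≤ J → φ I ≤ φ J)
    (hδ1 : ∀ I : Ideal K, I ≤ δ I) (hδ2 : ∀ I J : Ideal K, I ≤ J → δ I ≤ δ J)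
    (P : Ideal K) (s : K) (hs : s ∈ S)
    (hproper : P ≠ ⊤) (hdisj : ∀ x ∈ S, x ∉ P)
    (hstrong : ∀ A B : Ideal K, A * B ≤ P → ¬ (A * B ≤ φ P) →
      (∀ x ∈ A, s * x ∈ P) ∨ (∀ x ∈ B, s * x ∈ δ P))
    (a b : K) (hab : a * b ∈ φ P)
    (hsa : s * a ∉ P) (hsb : s * b ∉ P) (hsa' : s * a ∉ δ P) (hsb' : s * b ∉ δ P) :
    ∀ p ∈ P, a * p ∈ φ P ∧ b * p ∈ φ P := by
  intro p hp
  exact ⟨aux_strong_step φ δ P s hstrong a b hab hsa hsb' (hφ1 P) p hp,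
    aux_strong_step φ δ P s hstrong b a (by rwa [mul_comm]) hsb hsa' (hφ1 P) p hp⟩
end

section
/- Let K be a commutative ring, S a multiplicative submonoid of K, φ a reduction function and δ an expansion function of ideals of K. Let P be a strongly φ-δ-S-primary ideal of K associated to s ∈ S which is not δ-S-primary associated to s (i.e., there exist a, b ∈ K with ab ∈ P, s·a ∉ P and s·b ∉ δ(P)). Then P·P ⊆ φ(P). -/
/-- Let `P` be a strongly `φ`-`δ`-`S`-primary ideal of `K` associated to `s ∈ S`
which is not `δ`-`S`-primary associated to `s`. Then `P·P ⊆ φ(P)`. -/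
theorem strongly_not_delta_S_primary_sq_subset {K : Type*} [CommRing K] (S : Submonoid K)
    (φ δ : Ideal K → Ideal K)
    (hφ1 : ∀ I, φ I ≤ I) (hφ2 : ∀ I J : Ideal K, I ≤ J → φ I ≤ φ J)
    (hδ1 : ∀ I : Ideal K, I ≤ δ I) (hδ2 : ∀ I J : Ideal K, I ≤ J → δ I ≤ δ J)
    (P : Ideal K) (s : K) (hs : s ∈ S)
    (hproper : P ≠ ⊤) (hdisj : ∀ x ∈ S, x ∉ P)
    (hstrong : ∀ A B : Ideal K, A * B ≤ P → ¬ (A * B ≤ φ P) →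
      (∀ x ∈ A, s * x ∈ P) ∨ (∀ x ∈ B, s * x ∈ δ P))
    (hnot : ∃ a b : K, a * b ∈ P ∧ s * a ∉ P ∧ s * b ∉ δ P) :
    P * P ≤ φ P := by
  by_contra h
  obtain ⟨a, b, hab, ha, hb⟩ := hnot
  set A := P ⊔ Ideal.span {a} with hA
  set B := P ⊔ Ideal.span {b} with hB
  have hABP : A * B ≤ P := by
    rw [Ideal.mul_le]
    intro r hr t ht
    rcases Submodule.mem_sup.1 hr with ⟨p, hp, x, hx, rfl⟩
    rcases Submodule.mem_sup.1 ht with ⟨q, hq, y, hy, rfl⟩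
    rcases Ideal.mem_span_singleton.1 hx with ⟨c, rfl⟩
    rcases Ideal.mem_span_singleton.1 hy with ⟨d, rfl⟩
    have : (p + a * c) * (q + b * d) =
        p * (q + b * d) + (a * c) * q + (c * d) * (a * b) := by ring
    rw [this]
    exact P.add_mem (P.add_mem (P.mul_mem_right _ hp) (P.mul_mem_left _ hq))
      (P.mul_mem_left _ hab)
  have hABφ : ¬ A * B ≤ φ P := fun hle =>
    h (le_trans (Ideal.mul_mono le_sup_left le_sup_left) hle)
  rcases hstrong A B hABP hABφ with h1 | h2
  · exact ha (h1 a (Submodule.mem_sup_right (Ideal.mem_span_singleton_self a)))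
  · exact hb (h2 b (Submodule.mem_sup_right (Ideal.mem_span_singleton_self b)))
end

section
/- Let K be a commutative ring, S a multiplicative submonoid of K, φ a reduction function and δ an expansion function of ideals of K. If P is a strongly φ-δ-S-primary ideal of K associated to s ∈ S, then P ⊆ rad(φ(P)) or s·rad(φ(P)) ⊆ δ(P) (i.e., s·u ∈ δ(P) for every u ∈ rad(φ(P))). -/
/-- If `P` is a strongly `φ`-`δ`-`S`-primary ideal of `K` associated to `s ∈ S`,
then `P ⊆ rad(φ(P))` or `s·rad(φ(P)) ⊆ δ(P)`. -/
theorem strongly_subset_radical_or {K : Type*} [CommRing K] (S : Submonoid K)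
    (φ δ : Ideal K → Ideal K)
    (hφ1 : ∀ I, φ I ≤ I) (hφ2 : ∀ I J : Ideal K, I ≤ J → φ I ≤ φ J)
    (hδ1 : ∀ I : Ideal K, I ≤ δ I) (hδ2 : ∀ I J : Ideal K, I ≤ J → δ I ≤ δ J)
    (P : Ideal K) (s : K) (hs : s ∈ S)
    (hproper : P ≠ ⊤) (hdisj : ∀ x ∈ S, x ∉ P)
    (hstrong : ∀ A B : Ideal K, A * B ≤ P → ¬ (A * B ≤ φ P) →
      (∀ x ∈ A, s * x ∈ P) ∨ (∀ x ∈ B, s * x ∈ δ P)) :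
    P ≤ (φ P).radical ∨ ∀ u ∈ (φ P).radical, s * u ∈ δ P := by
  by_cases hrad : P ≤ (φ P).radical
  · exact Or.inl hrad
  right
  obtain ⟨p, hpP, hprad⟩ := SetLike.not_le_iff_exists.mp hrad
  have hp2 : p * p ∉ φ P := fun h => hprad ⟨2, by rwa [pow_two]⟩
  intro u hu
  obtain ⟨n, hn⟩ := hu
  have key : ∀ m k : ℕ, s ^ k * u ^ m ∈ P → s * u ∈ δ P := by
    intro m
    induction m with
    | zero =>
      intro k hk
      rw [pow_zero, mul_one] at hk
      exact absurd hk (hdisj _ (pow_mem hs k))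
    | succ m ih =>
      intro k hk
      have h1 : Ideal.span {s ^ k * u ^ m, p} * Ideal.span {u, p} ≤ P := by
        rw [Ideal.span_mul_span', Ideal.span_le]
        rintro x ⟨a, ha, b, hb, rfl⟩
        dsimp only
        simp only [Set.mem_insert_iff, Set.mem_singleton_iff] at ha hb
        rcases ha with rfl | rfl <;> rcases hb with rfl | rfl
        · rw [mul_assoc, ← pow_succ]; exact hk
        · exact P.mul_mem_left _ hpP
        · exact P.mul_mem_right _ hpP
        · exact P.mul_mem_right _ hpP
      have h2 : ¬ (Ideal.span {s ^ k * u ^ m, p} * Ideal.span {u, p} ≤ φ P) := by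
        intro h
        exact hp2 (h (Ideal.mul_mem_mul (Ideal.subset_span (by simp))
          (Ideal.subset_span (by simp))))
      rcases hstrong _ _ h1 h2 with h | h
      · have := h _ (Ideal.subset_span (show s ^ k * u ^ m ∈ _ by simp))
        apply ih (k + 1)
        have e : s ^ (k + 1) * u ^ m = s * (s ^ k * u ^ m) := by ring
        rw [e]; exact this
      · exact h u (Ideal.subset_span (by simp))
  exact key n 0 (by simpa using hφ1 P hn)
end

section
/- Let K be a commutative ring, S a multiplicative submonoid of K, φ a reduction function and δ an expansion function of ideals of K, and let P be a proper ideal of K with P ∩ S = ∅ and s ∈ S. Then P is strongly φ-δ-S-primary associated to s if and only if for every u ∈ K \ (δ(P) : s), either (P : u) = (φ(P) : u) or (P : u) ⊆ (P : s). -/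
/-- `P` is strongly `φ`-`δ`-`S`-primary associated to `s` iff for every
`u ∈ K \ (δ(P) : s)`, either `(P : u) = (φ(P) : u)` or `(P : u) ⊆ (P : s)`. -/
theorem strongly_iff_colon_condition {K : Type*} [CommRing K] (S : Submonoid K)
    (φ δ : Ideal K → Ideal K)
    (hφ1 : ∀ I, φ I ≤ I) (hφ2 : ∀ I J : Ideal K, I ≤ J → φ I ≤ φ J)
    (hδ1 : ∀ I : Ideal K, I ≤ δ I) (hδ2 : ∀ I J : Ideal K, I ≤ J → δ I ≤ δ J)
    (P : Ideal K) (s : K) (hs : s ∈ S)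
    (hproper : P ≠ ⊤) (hdisj : ∀ x ∈ S, x ∉ P) :
    (∀ A B : Ideal K, A * B ≤ P → ¬ (A * B ≤ φ P) →
      (∀ x ∈ A, s * x ∈ P) ∨ (∀ x ∈ B, s * x ∈ δ P)) ↔
    (∀ u : K, u ∉ (δ P).colon (Ideal.span {s}) →
      P.colon (Ideal.span {u}) = (φ P).colon (Ideal.span {u}) ∨
        P.colon (Ideal.span {u}) ≤ P.colon (Ideal.span {s})) := by
  constructor
  · intro h u hu
    by_cases hc : P.colon (Ideal.span {u}) ≤ (φ P).colon (Ideal.span {u})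
    · left
      refine le_antisymm hc ?_
      intro x hx
      rw [Ideal.mem_colon_span_singleton] at hx ⊢
      exact hφ1 P hx
    · have hAB : P.colon (Ideal.span {u}) * Ideal.span {u} ≤ P := by
        rw [Ideal.mul_le]
        intro r hr t ht
        rw [Ideal.mem_span_singleton] at ht
        obtain ⟨c, rfl⟩ := ht
        rw [Ideal.mem_colon_span_singleton] at hr
        rw [show r * (u * c) = r * u * c by ring]
        exact P.mul_mem_right c hr
      have hABφ : ¬ (P.colon (Ideal.span {u}) * Ideal.span {u} ≤ φ P) := by
        intro hle
        apply hc
        intro x hx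
        rw [Ideal.mem_colon_span_singleton]
        exact hle (Ideal.mul_mem_mul hx (Ideal.subset_span rfl))
      rcases h _ _ hAB hABφ with h1 | h2
      · right
        intro x hx
        rw [Ideal.mem_colon_span_singleton, mul_comm]
        exact h1 x hx
      · exfalso
        apply hu
        rw [Ideal.mem_colon_span_singleton, mul_comm]
        exact h2 u (Ideal.subset_span rfl)
  · intro h A B hAB hABφ
    by_contra hct
    push_neg at hct
    obtain ⟨⟨a, ha, hsa⟩, b0, hb0, hsb0⟩ := hct
    have key : ∀ b ∈ B, s * b ∉ δ P → ∀ a' ∈ A, a' * b ∈ φ P := by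
      intro b hb hsb a' ha'
      have hu : b ∉ (δ P).colon (Ideal.span {s}) := by
        rw [Ideal.mem_colon_span_singleton, mul_comm]
        exact hsb
      rcases h b hu with heq | hle
      · have : a' ∈ P.colon (Ideal.span {b}) :=
          Ideal.mem_colon_span_singleton.2 (hAB (Ideal.mul_mem_mul ha' hb))
        rw [heq, Ideal.mem_colon_span_singleton] at this
        exact this
      · exfalso
        apply hsa
        have : a ∈ P.colon (Ideal.span {b}) :=
          Ideal.mem_colon_span_singleton.2 (hAB (Ideal.mul_mem_mul ha hb))
        have := hle this
        rw [Ideal.mem_colon_span_singleton, mul_comm] at this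
        exact this
    apply hABφ
    rw [Ideal.mul_le]
    intro a' ha' b hb
    by_cases hsb : s * b ∈ δ P
    · have hsum : s * (b + b0) ∉ δ P := by
        intro H
        apply hsb0
        have := (δ P).sub_mem H hsb
        rw [mul_add] at this
        simpa using this
      have h1 := key (b + b0) (B.add_mem hb hb0) hsum a' ha'
      have h2 := key b0 hb0 hsb0 a' ha'
      have := (φ P).sub_mem h1 h2
      rw [mul_add] at this
      simpa using this
    · exact key b hb hsb a' ha'
end

section
/- Let K be a commutative ring, S a multiplicative submonoid of K, φ a reduction function and δ an expansion function of ideals of K, and let P be a proper ideal of K with P ∩ S = ∅ and s ∈ S. Then P is strongly φ-δ-S-primary associated to s if and only if for every u ∈ K \ (P : s), either (P : u) = (φ(P) : u) or (P : u) ⊆ (δ(P) : s). -/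
/-- `P` is strongly `φ`-`δ`-`S`-primary associated to `s` iff for every
`u ∈ K \ (P : s)`, either `(P : u) = (φ(P) : u)` or `(P : u) ⊆ (δ(P) : s)`. -/
theorem strongly_iff_colon_condition' {K : Type*} [CommRing K] (S : Submonoid K)
    (φ δ : Ideal K → Ideal K)
    (hφ1 : ∀ I, φ I ≤ I) (hφ2 : ∀ I J : Ideal K, I ≤ J → φ I ≤ φ J)
    (hδ1 : ∀ I : Ideal K, I ≤ δ I) (hδ2 : ∀ I J : Ideal K, I ≤ J → δ I ≤ δ J)
    (P : Ideal K) (s : K) (hs : s ∈ S)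
    (hproper : P ≠ ⊤) (hdisj : ∀ x ∈ S, x ∉ P) :
    (∀ A B : Ideal K, A * B ≤ P → ¬ (A * B ≤ φ P) →
      (∀ x ∈ A, s * x ∈ P) ∨ (∀ x ∈ B, s * x ∈ δ P)) ↔
    (∀ u : K, u ∉ P.colon (Ideal.span {s}) →
      P.colon (Ideal.span {u}) = (φ P).colon (Ideal.span {u}) ∨
        P.colon (Ideal.span {u}) ≤ (δ P).colon (Ideal.span {s})) := by
  constructor
  · intro h u hu
    by_cases hc : P.colon (Ideal.span {u}) = (φ P).colon (Ideal.span {u})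
    · exact Or.inl hc
    right
    have hAB : Ideal.span {u} * P.colon (Ideal.span {u}) ≤ P := by
      rw [Ideal.mul_le]
      intro r hr v hv
      rw [Ideal.mem_span_singleton] at hr
      obtain ⟨c, rfl⟩ := hr
      rw [Ideal.mem_colon_span_singleton] at hv
      have : v * u ∈ P := hv
      have heq : u * c * v = c * (v * u) := by ring
      rw [heq]
      exact Ideal.mul_mem_left _ c this
    have hnot : ¬ (Ideal.span {u} * P.colon (Ideal.span {u}) ≤ φ P) := by
      intro hle
      apply hc
      apply le_antisymm
      · intro v hv
        rw [Ideal.mem_colon_span_singleton]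
        have : u * v ∈ φ P := hle (Ideal.mul_mem_mul (Ideal.mem_span_singleton_self u) hv)
        rwa [mul_comm] at this
      · intro v hv
        rw [Ideal.mem_colon_span_singleton] at hv ⊢
        exact hφ1 P hv
    rcases h _ _ hAB hnot with h1 | h2
    · exact absurd (by
        rw [Ideal.mem_colon_span_singleton, mul_comm]
        exact h1 u (Ideal.mem_span_singleton_self u)) hu
    · intro v hv
      rw [Ideal.mem_colon_span_singleton, mul_comm]
      exact h2 v hv
  · intro h A B hAB hn
    by_cases hA : ∀ x ∈ A, s * x ∈ P
    · exact Or.inl hA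
    right
    push_neg at hA
    obtain ⟨a₁, ha₁A, ha₁⟩ := hA
    by_contra hB
    push_neg at hB
    obtain ⟨b₀, hb₀B, hb₀⟩ := hB
    have key : ∀ a ∈ A, s * a ∉ P → ∀ b ∈ B, a * b ∈ φ P := by
      intro a haA ha b hbB
      have hu : a ∉ P.colon (Ideal.span {s}) := by
        rw [Ideal.mem_colon_span_singleton, mul_comm]; exact ha
      rcases h a hu with h1 | h2
      · have hb : b ∈ (φ P).colon (Ideal.span {a}) := by
          rw [← h1, Ideal.mem_colon_span_singleton, mul_comm]
          exact hAB (Ideal.mul_mem_mul haA hbB)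
        rw [Ideal.mem_colon_span_singleton] at hb
        rwa [mul_comm] at hb
      · exfalso
        apply hb₀
        have hb : b₀ ∈ (δ P).colon (Ideal.span {s}) := h2 (by
          rw [Ideal.mem_colon_span_singleton, mul_comm]
          exact hAB (Ideal.mul_mem_mul haA hb₀B))
        rw [Ideal.mem_colon_span_singleton] at hb
        rwa [mul_comm] at hb
    apply hn
    rw [Ideal.mul_le]
    intro a haA b hbB
    by_cases hsa : s * a ∈ P
    · have hsum : s * (a + a₁) ∉ P := by
        intro hc
        apply ha₁
        have := P.sub_mem hc hsa
        rw [mul_add] at this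
        simpa using this
      have h1 : (a + a₁) * b ∈ φ P := key (a + a₁) (A.add_mem haA ha₁A) hsum b hbB
      have h2 : a₁ * b ∈ φ P := key a₁ ha₁A ha₁ b hbB
      have := (φ P).sub_mem h1 h2
      rw [add_mul] at this
      simpa using this
    · exact key a haA hsa b hbB
end

section
/- Let K be a commutative ring, S a multiplicative submonoid of K, φ a reduction function and δ an expansion function of ideals of K. Let P be a strongly φ-δ-S-primary ideal of K associated to s ∈ S and let Q be an ideal of K with Q ⊄ P. If (δ(P) : Q) ⊆ δ((P : Q)) and (φ(P) : Q) ⊆ φ((P : Q)), then the colon ideal (P : Q) satisfies the φ-δ-S-primary condition associated to s: for all a, b ∈ K, ab ∈ (P : Q) \ φ((P : Q)) implies s·a ∈ (P : Q) or s·b ∈ δ((P : Q)). -/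
/-- Let `P` be a strongly `φ`-`δ`-`S`-primary ideal of `K` associated to `s ∈ S`
and `Q` an ideal of `K` with `Q ⊄ P`. If `(δ(P) : Q) ⊆ δ((P : Q))` and
`(φ(P) : Q) ⊆ φ((P : Q))`, then `(P : Q)` satisfies the `φ`-`δ`-`S`-primary condition
associated to `s`. -/
theorem colon_ideal_phi_delta_S_primary {K : Type*} [CommRing K] (S : Submonoid K)
    (φ δ : Ideal K → Ideal K)
    (hφ1 : ∀ I, φ I ≤ I) (hφ2 : ∀ I J : Ideal K, I ≤ J → φ I ≤ φ J)
    (hδ1 : ∀ I : Ideal K, I ≤ δ I) (hδ2 : ∀ I J : Ideal K, I ≤ J → δ I ≤ δ J)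
    (P Q : Ideal K) (s : K) (hs : s ∈ S)
    (hproper : P ≠ ⊤) (hdisj : ∀ x ∈ S, x ∉ P)
    (hstrong : ∀ A B : Ideal K, A * B ≤ P → ¬ (A * B ≤ φ P) →
      (∀ x ∈ A, s * x ∈ P) ∨ (∀ x ∈ B, s * x ∈ δ P))
    (hQ : ¬ Q ≤ P)
    (hδc : (δ P).colon Q ≤ δ (P.colon Q))
    (hφc : (φ P).colon Q ≤ φ (P.colon Q)) :
    ∀ a b : K, a * b ∈ P.colon Q → a * b ∉ φ (P.colon Q) →
      s * a ∈ P.colon Q ∨ s * b ∈ δ (P.colon Q) := by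
  intro a b hab habφ
  set A : Ideal K := Ideal.span {a}
  set B : Ideal K := Ideal.span {b} * Q
  have hAB : A * B ≤ P := by
    rw [← mul_assoc, Ideal.span_singleton_mul_span_singleton, Ideal.mul_le]
    intro r hr q hq
    rcases Ideal.mem_span_singleton.1 hr with ⟨c, rfl⟩
    have := Submodule.mem_colon.1 hab q hq
    have : a * b * c * q = c * (a * b * q) := by ring
    rw [this]
    exact Ideal.mul_mem_left _ _ (Submodule.mem_colon.1 hab q hq)
  have hnφ : ¬ (A * B ≤ φ P) := by
    intro h
    apply habφ
    apply hφc
    apply Submodule.mem_colon.2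
    intro q hq
    apply h
    rw [← mul_assoc, Ideal.span_singleton_mul_span_singleton]
    exact Ideal.mul_mem_mul (Ideal.mem_span_singleton_self _) hq
  rcases hstrong A B hAB hnφ with h | h
  · left
    have hsa : s * a ∈ P := h a (Ideal.mem_span_singleton_self a)
    exact Submodule.mem_colon.2 fun q hq => Ideal.mul_mem_right q P hsa
  · right
    apply hδc
    apply Submodule.mem_colon.2
    intro q hq
    have hbq : b * q ∈ B := Ideal.mul_mem_mul (Ideal.mem_span_singleton_self b) hq
    have := h _ hbq
    rwa [smul_eq_mul, mul_assoc]
end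

section
/- Let K be a commutative ring, S a multiplicative submonoid of K, φ a reduction function and δ an expansion function of ideals of K. Let P be a strongly φ-δ-S-primary ideal of K associated to s ∈ S which is not δ-S-primary associated to s (there exist a, b ∈ K with ab ∈ P, s·a ∉ P and s·b ∉ δ(P)). If (P : s) = (δ(P) : s), then s·rad(φ(P))·P ⊆ φ(P), i.e., s·u·p ∈ φ(P) for every u ∈ rad(φ(P)) and every p ∈ P. -/
private lemma span_sup_mul_span_sup_le {K : Type*} [CommRing K] {P : Ideal K} {x y : K}
    (h : x * y ∈ P) : (Ideal.span {x} ⊔ P) * (Ideal.span {y} ⊔ P) ≤ P := by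
  rw [Ideal.mul_le]
  intro r hr t ht
  obtain ⟨r1, hr1, r2, hr2, rfl⟩ := Submodule.mem_sup.mp hr
  obtain ⟨t1, ht1, t2, ht2, rfl⟩ := Submodule.mem_sup.mp ht
  obtain ⟨c, rfl⟩ := Ideal.mem_span_singleton'.mp hr1
  obtain ⟨d, rfl⟩ := Ideal.mem_span_singleton'.mp ht1
  have e : (c * x + r2) * (d * y + t2)
      = (c * d) * (x * y) + (c * x) * t2 + (d * y) * r2 + r2 * t2 := by ring
  rw [e]
  exact add_mem (add_mem (add_mem (P.mul_mem_left _ h) (P.mul_mem_left _ ht2))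
    (P.mul_mem_left _ hr2)) (P.mul_mem_left _ ht2)

/-- Let `P` be a strongly `φ`-`δ`-`S`-primary ideal of `K` associated to `s ∈ S`
which is not `δ`-`S`-primary associated to `s`. If `(P : s) = (δ(P) : s)`, then
`s·rad(φ(P))·P ⊆ φ(P)`. -/
theorem strongly_smul_radical_mul_subset {K : Type*} [CommRing K] (S : Submonoid K)
    (φ δ : Ideal K → Ideal K)
    (hφ1 : ∀ I, φ I ≤ I) (hφ2 : ∀ I J : Ideal K, I ≤ J → φ I ≤ φ J)
    (hδ1 : ∀ I : Ideal K, I ≤ δ I) (hδ2 : ∀ I J : Ideal K, I ≤ J → δ I ≤ δ J)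
    (P : Ideal K) (s : K) (hs : s ∈ S)
    (hproper : P ≠ ⊤) (hdisj : ∀ x ∈ S, x ∉ P)
    (hstrong : ∀ A B : Ideal K, A * B ≤ P → ¬ (A * B ≤ φ P) →
      (∀ x ∈ A, s * x ∈ P) ∨ (∀ x ∈ B, s * x ∈ δ P))
    (hnot : ∃ a b : K, a * b ∈ P ∧ s * a ∉ P ∧ s * b ∉ δ P)
    (hcolon : P.colon (Ideal.span {s}) = (δ P).colon (Ideal.span {s})) :
    ∀ u ∈ (φ P).radical, ∀ p ∈ P, s * u * p ∈ φ P := by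
  obtain ⟨a, b, hab, hsa, hsb⟩ := hnot
  -- from the colon hypothesis: s*x ∈ δP → s*x ∈ P
  have hcol : ∀ x : K, s * x ∈ δ P → s * x ∈ P := by
    intro x hx
    have h1 : x ∈ (δ P).colon (Ideal.span {s}) :=
      Ideal.mem_colon_span_singleton.mpr (by rwa [mul_comm] at hx)
    rw [← hcolon] at h1
    have := Ideal.mem_colon_span_singleton.mp h1
    rwa [mul_comm] at this
  -- P*P ≤ φ P
  have hP2 : ∀ p ∈ P, ∀ q ∈ P, p * q ∈ φ P := by
    have hAB := span_sup_mul_span_sup_le (P := P) hab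
    by_cases hφ : (Ideal.span {a} ⊔ P) * (Ideal.span {b} ⊔ P) ≤ φ P
    · intro p hp q hq
      exact hφ (Ideal.mul_mem_mul (Submodule.mem_sup_right hp) (Submodule.mem_sup_right hq))
    · rcases hstrong _ _ hAB hφ with hL | hR
      · exact absurd (hL a (Submodule.mem_sup_left (Ideal.mem_span_singleton_self a))) hsa
      · exact absurd (hR b (Submodule.mem_sup_left (Ideal.mem_span_singleton_self b))) hsb
  intro u hu p hp
  obtain ⟨n, hn⟩ := hu
  have key : ∀ t m : ℕ, s ^ m * u ^ t ∈ P → s * u * p ∈ φ P := by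
    intro t
    induction t with
    | zero =>
        intro m h
        rw [pow_zero, mul_one] at h
        exact absurd h (hdisj _ (pow_mem hs m))
    | succ t ih =>
        intro m h
        have hxy : u * (s ^ m * u ^ t) ∈ P := by
          have : u * (s ^ m * u ^ t) = s ^ m * u ^ (t + 1) := by ring
          rwa [this]
        have hAB := span_sup_mul_span_sup_le (P := P) hxy
        by_cases hφ : (Ideal.span {u} ⊔ P) * (Ideal.span {s ^ m * u ^ t} ⊔ P) ≤ φ P
        · have : u * p ∈ φ P :=
            hφ (Ideal.mul_mem_mul (Submodule.mem_sup_left (Ideal.mem_span_singleton_self u))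
              (Submodule.mem_sup_right hp))
          rw [mul_assoc]
          exact (φ P).mul_mem_left s this
        · rcases hstrong _ _ hAB hφ with hL | hR
          · have hsu : s * u ∈ P :=
              hL u (Submodule.mem_sup_left (Ideal.mem_span_singleton_self u))
            exact hP2 _ hsu _ hp
          · have hδm : s * (s ^ m * u ^ t) ∈ δ P :=
              hR _ (Submodule.mem_sup_left (Ideal.mem_span_singleton_self _))
            have hPm : s * (s ^ m * u ^ t) ∈ P := hcol _ hδm
            have : s ^ (m + 1) * u ^ t ∈ P := by
              have e : s ^ (m + 1) * u ^ t = s * (s ^ m * u ^ t) := by ring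
              rwa [e]
            exact ih (m + 1) this
  exact key n 0 (by simpa using hφ1 P hn)
end

section
/- Let K be a commutative ring, S a multiplicative submonoid of K, φ a reduction function and δ an expansion function of ideals of K. Let P and Q be strongly φ-δ-S-primary ideals of K associated to s ∈ S, neither of which is δ-S-primary associated to s. If (P : s) = (δ(P) : s), (Q : s) = (δ(Q) : s), and φ(Q) ⊆ φ(P), then s·Q·P ⊆ φ(P), i.e., s·q·p ∈ φ(P) for every q ∈ Q and every p ∈ P. -/
/-!
A strongly `φ`-`δ`-`S`-primary ideal `I` that is not `δ`-`S`-primary, witnessed by `a b`, satisfies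
`I² ⊆ φ(I)`: otherwise the strong property applied to `(a) + I` and `(b) + I` would give
`s a ∈ I` or `s b ∈ δ(I)`. Now apply the strong property of `P` to `A = P + Q` and `B = Q`.
Since `Q² ⊆ φ(Q) ⊆ φ(P) ⊆ P`, we have `A B ⊆ P`. If `A B ⊆ φ(P)` then already `q p ∈ φ(P)`;
otherwise `s q ∈ P`, directly or through `(P : s) = (δ(P) : s)`, and `s q p ∈ P² ⊆ φ(P)`.
-/

namespace Ideal

variable {K : Type*} [CommRing K]

theorem mul_self_le_of_strongly_of_not_primary {I ψ ε : Ideal K} {s a b : K}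
    (hstrong : ∀ A B : Ideal K, A * B ≤ I → ¬ (A * B ≤ ψ) →
      (∀ x ∈ A, s * x ∈ I) ∨ (∀ x ∈ B, s * x ∈ ε))
    (hab : a * b ∈ I) (ha : s * a ∉ I) (hb : s * b ∉ ε) :
    I * I ≤ ψ := by
  have hle : (span {a} ⊔ I) * (span {b} ⊔ I) ≤ I := by
    simp only [mul_sup, sup_mul, span_singleton_mul_span_singleton]
    exact sup_le (sup_le ((span_singleton_le_iff_mem I).2 hab) mul_le_left)
      (sup_le mul_le_right mul_le_left)
  have hψ : (span {a} ⊔ I) * (span {b} ⊔ I) ≤ ψ := by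
    by_contra hnot
    rcases hstrong _ _ hle hnot with h | h
    · exact ha (h a (mem_sup_left (mem_span_singleton_self a)))
    · exact hb (h b (mem_sup_left (mem_span_singleton_self b)))
  exact (mul_mono le_sup_right le_sup_right).trans hψ

theorem mul_mem_of_colon_span_singleton_eq {I J : Ideal K} {s x : K}
    (hcolon : I.colon (span {s}) = J.colon (span {s})) (hx : s * x ∈ J) : s * x ∈ I := by
  have hxJ : x ∈ J.colon (span {s}) := by rwa [mem_colon_span_singleton, mul_comm]
  rwa [← hcolon, mem_colon_span_singleton, mul_comm] at hxJ

end Ideal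

open Ideal in
theorem strongly_smul_mul_subset_general {K : Type*} [CommRing K]
    (φ δ : Ideal K → Ideal K)
    (hφ1 : ∀ I, φ I ≤ I)
    (P Q : Ideal K) (s : K)
    (hPstrong : ∀ A B : Ideal K, A * B ≤ P → ¬ (A * B ≤ φ P) →
      (∀ x ∈ A, s * x ∈ P) ∨ (∀ x ∈ B, s * x ∈ δ P))
    (hQstrong : ∀ A B : Ideal K, A * B ≤ Q → ¬ (A * B ≤ φ Q) →
      (∀ x ∈ A, s * x ∈ Q) ∨ (∀ x ∈ B, s * x ∈ δ Q))
    (hPnot : ∃ a b : K, a * b ∈ P ∧ s * a ∉ P ∧ s * b ∉ δ P)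
    (hQnot : ∃ a b : K, a * b ∈ Q ∧ s * a ∉ Q ∧ s * b ∉ δ Q)
    (hPcolon : P.colon (Ideal.span {s}) = (δ P).colon (Ideal.span {s}))
    (hφQP : φ Q ≤ φ P) :
    ∀ q ∈ Q, ∀ p ∈ P, s * q * p ∈ φ P := by
  obtain ⟨aP, bP, habP, haP, hbP⟩ := hPnot
  obtain ⟨aQ, bQ, habQ, haQ, hbQ⟩ := hQnot
  have hP2 : P * P ≤ φ P := mul_self_le_of_strongly_of_not_primary hPstrong habP haP hbP
  have hQ2 : Q * Q ≤ φ Q := mul_self_le_of_strongly_of_not_primary hQstrong habQ haQ hbQ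
  have hAB : (P ⊔ Q) * Q ≤ P := by
    rw [Ideal.sup_mul]
    exact sup_le mul_le_left (hQ2.trans (hφQP.trans (hφ1 P)))
  intro q hq p hp
  by_cases hABφ : (P ⊔ Q) * Q ≤ φ P
  · have hpq : p * q ∈ φ P := hABφ (mul_mem_mul (mem_sup_left hp) hq)
    simpa only [mul_assoc, mul_comm q p] using (φ P).mul_mem_left s hpq
  · have hsq : s * q ∈ P := (hPstrong _ _ hAB hABφ).elim (fun h ↦ h q (mem_sup_right hq))
      (fun h ↦ mul_mem_of_colon_span_singleton_eq hPcolon (h q hq))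
    exact hP2 (mul_mem_mul hsq hp)

/-- Let `P` and `Q` be strongly `φ`-`δ`-`S`-primary ideals of `K` associated to
`s ∈ S`, neither of which is `δ`-`S`-primary associated to `s`. If `(P : s) = (δ(P) : s)`,
`(Q : s) = (δ(Q) : s)`, and `φ(Q) ⊆ φ(P)`, then `s·Q·P ⊆ φ(P)`. -/
theorem strongly_smul_mul_subset {K : Type*} [CommRing K] (S : Submonoid K)
    (φ δ : Ideal K → Ideal K)
    (hφ1 : ∀ I, φ I ≤ I) (hφ2 : ∀ I J : Ideal K, I ≤ J → φ I ≤ φ J)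
    (hδ1 : ∀ I : Ideal K, I ≤ δ I) (hδ2 : ∀ I J : Ideal K, I ≤ J → δ I ≤ δ J)
    (P Q : Ideal K) (s : K) (hs : s ∈ S)
    (hPproper : P ≠ ⊤) (hPdisj : ∀ x ∈ S, x ∉ P)
    (hQproper : Q ≠ ⊤) (hQdisj : ∀ x ∈ S, x ∉ Q)
    (hPstrong : ∀ A B : Ideal K, A * B ≤ P → ¬ (A * B ≤ φ P) →
      (∀ x ∈ A, s * x ∈ P) ∨ (∀ x ∈ B, s * x ∈ δ P))
    (hQstrong : ∀ A B : Ideal K, A * B ≤ Q → ¬ (A * B ≤ φ Q) →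
      (∀ x ∈ A, s * x ∈ Q) ∨ (∀ x ∈ B, s * x ∈ δ Q))
    (hPnot : ∃ a b : K, a * b ∈ P ∧ s * a ∉ P ∧ s * b ∉ δ P)
    (hQnot : ∃ a b : K, a * b ∈ Q ∧ s * a ∉ Q ∧ s * b ∉ δ Q)
    (hPcolon : P.colon (Ideal.span {s}) = (δ P).colon (Ideal.span {s}))
    (hQcolon : Q.colon (Ideal.span {s}) = (δ Q).colon (Ideal.span {s}))
    (hφQP : φ Q ≤ φ P) :
    ∀ q ∈ Q, ∀ p ∈ P, s * q * p ∈ φ P :=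
  strongly_smul_mul_subset_general φ δ hφ1 P Q s hPstrong hQstrong hPnot hQnot hPcolon hφQP
end

section
/- Let K₁ and K₂ be commutative rings and k : K₁ → K₂ a surjective ring homomorphism. Let φ, δ be a reduction function and an expansion function of ideals of K₁, and ψ, γ a reduction function and an expansion function of ideals of K₂, such that for every ideal P₂ of K₂: φ(k⁻¹(P₂)) = k⁻¹(ψ(P₂)) and δ(k⁻¹(P₂)) = k⁻¹(γ(P₂)). Let S be a multiplicative submonoid of K₁ and s ∈ S. If P₂ is a ψ-γ-k(S)-primary ideal of K₂ associated to k(s) ∈ k(S), then k⁻¹(P₂) is a φ-δ-S-primary ideal of K₁ associated to s, i.e., k⁻¹(P₂) is proper, k⁻¹(P₂) ∩ S = ∅, and for all a, b ∈ K₁, ab ∈ k⁻¹(P₂) \ φ(k⁻¹(P₂)) implies s·a ∈ k⁻¹(P₂) or s·b ∈ δ(k⁻¹(P₂)). -/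
/-- Let `k : K₁ → K₂` be a surjective ring homomorphism compatible with the
reduction/expansion functions. If `P₂` is a `ψ`-`γ`-`k(S)`-primary ideal of `K₂` associated
to `k(s)`, then `k⁻¹(P₂)` is a `φ`-`δ`-`S`-primary ideal of `K₁` associated to `s`. -/
theorem comap_phi_delta_S_primary {K₁ K₂ : Type*} [CommRing K₁] [CommRing K₂]
    (k : K₁ →+* K₂) (hk : Function.Surjective k)
    (φ δ : Ideal K₁ → Ideal K₁) (ψ γ : Ideal K₂ → Ideal K₂)
    (hφ1 : ∀ I, φ I ≤ I) (hφ2 : ∀ I J : Ideal K₁, I ≤ J → φ I ≤ φ J)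
    (hδ1 : ∀ I : Ideal K₁, I ≤ δ I) (hδ2 : ∀ I J : Ideal K₁, I ≤ J → δ I ≤ δ J)
    (hψ1 : ∀ I, ψ I ≤ I) (hψ2 : ∀ I J : Ideal K₂, I ≤ J → ψ I ≤ ψ J)
    (hγ1 : ∀ I : Ideal K₂, I ≤ γ I) (hγ2 : ∀ I J : Ideal K₂, I ≤ J → γ I ≤ γ J)
    (hcompφ : ∀ P₂ : Ideal K₂, φ (P₂.comap k) = (ψ P₂).comap k)
    (hcompδ : ∀ P₂ : Ideal K₂, δ (P₂.comap k) = (γ P₂).comap k)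
    (S : Submonoid K₁) (s : K₁) (hs : s ∈ S)
    (P₂ : Ideal K₂) (hproper : P₂ ≠ ⊤)
    (hdisj : ∀ y ∈ S.map k, y ∉ P₂)
    (hprimary : ∀ a b : K₂, a * b ∈ P₂ → a * b ∉ ψ P₂ →
      k s * a ∈ P₂ ∨ k s * b ∈ γ P₂) :
    P₂.comap k ≠ ⊤ ∧ (∀ x ∈ S, x ∉ P₂.comap k) ∧
      ∀ a b : K₁, a * b ∈ P₂.comap k → a * b ∉ φ (P₂.comap k) →
        s * a ∈ P₂.comap k ∨ s * b ∈ δ (P₂.comap k) := by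
  refine ⟨?_, ?_, ?_⟩
  · intro h
    apply hproper
    rw [Ideal.eq_top_iff_one] at h ⊢
    simpa using h
  · intro x hx hxP
    exact hdisj (k x) ⟨x, hx, rfl⟩ hxP
  · intro a b hab hnab
    rw [hcompφ] at hnab
    have := hprimary (k a) (k b) (by simpa using hab) (by simpa using hnab)
    rw [hcompδ]
    simpa using this
end
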